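/- arXiv:1606.00306 — 6 statements merged into one kernel-verified Lean document; each statement's English description precedes it below -/
import Mathlib

section
/- Let $r \ge 1$, let $\lambda : \mathrm{Fin}\, r \to \mathbb{R}$ satisfy $\lambda_i > 1$ for every $i$, let $\gamma$ be a permutation of $\mathrm{Fin}\, r$, and let $p, q$ be nonzero integers such that $\lambda_i^{\,p} = \lambda_{\gamma(i)}^{\,q}$ (integer powers) for all $i$. Then $p = q$ (in particular $|p| = |q|$). -/
/-- If `λ i > 1` for all `i`, `γ` is a permutation, and `λ i ^ p = λ (γ i) ^ q`
(integer powers) for all `i` with `p, q` nonzero integers, then `p = q`. -/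
theorem dilatation_exponents_eq (r : ℕ) (hr : 1 ≤ r) (lam : Fin r → ℝ)
    (hlam : ∀ i, 1 < lam i) (γ : Equiv.Perm (Fin r)) (p q : ℤ)
    (hp : p ≠ 0) (hq : q ≠ 0) (h : ∀ i, lam i ^ p = lam (γ i) ^ q) :
    p = q := by
  have hlog : ∀ i, (p : ℝ) * Real.log (lam i) = (q : ℝ) * Real.log (lam (γ i)) := by
    intro i
    have := congrArg Real.log (h i)
    simpa [Real.log_zpow] using this
  have hsum : (p : ℝ) * (∑ i, Real.log (lam i)) = (q : ℝ) * (∑ i, Real.log (lam i)) := by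
    calc (p : ℝ) * (∑ i, Real.log (lam i))
        = ∑ i, (p : ℝ) * Real.log (lam i) := by rw [Finset.mul_sum]
      _ = ∑ i, (q : ℝ) * Real.log (lam (γ i)) := Finset.sum_congr rfl (fun i _ => hlog i)
      _ = (q : ℝ) * ∑ i, Real.log (lam (γ i)) := by rw [Finset.mul_sum]
      _ = (q : ℝ) * ∑ i, Real.log (lam i) := by
          rw [Equiv.sum_comp γ (fun i => Real.log (lam i))]
  have hSpos : 0 < ∑ i, Real.log (lam i) := by
    apply Finset.sum_pos
    · intro i _; exact Real.log_pos (hlam i)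
    · have : Nonempty (Fin r) := Fin.pos_iff_nonempty.mp hr
      exact Finset.univ_nonempty
  have : (p : ℝ) = q := by
    have := mul_right_cancel₀ (ne_of_gt hSpos) hsum
    exact this
  exact_mod_cast this
end

section
/- Let $G$ be a group and $N \trianglelefteq G$ a normal subgroup with the unique-roots property. Then for every $f \in N$ of infinite order and every nonzero integer $t$, the normalizer in $G$ of the cyclic subgroup $\langle f \rangle$ equals the normalizer in $G$ of the cyclic subgroup $\langle f^t \rangle$: $N_G(\langle f \rangle) = N_G(\langle f^t \rangle)$. -/
/-!
When `a` has infinite order, `x` normalizes `⟨a⟩` exactly when `x a x⁻¹ = a` or `a⁻¹`, since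
these are the only generators of `⟨a⟩`. Raising to the `t`-th power turns the condition for `f`
into the condition for `f ^ t`; conversely, `x f x⁻¹` lies in `N` by normality, so uniqueness of
`t`-th roots in `N` recovers the condition for `f` from that for `f ^ t`.
-/

namespace Subgroup

variable {G : Type*} [Group G]

def HasUniqueRoots (N : Subgroup G) : Prop :=
  ∀ a ∈ N, ∀ b ∈ N, ∀ t : ℕ, 1 ≤ t → a ^ t = b ^ t → a = b

theorem HasUniqueRoots.zpow_eq_zpow_iff {N : Subgroup G} (hN : N.HasUniqueRoots) {a b : G}
    (ha : a ∈ N) (hb : b ∈ N) {t : ℤ} (ht : t ≠ 0) : a ^ t = b ^ t ↔ a = b := by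
  refine ⟨fun h ↦ ?_, congrArg (· ^ t)⟩
  obtain ⟨k, rfl | rfl⟩ := Int.eq_nat_or_neg t <;>
  · simp only [zpow_neg, inv_inj, zpow_natCast] at h
    exact hN a ha b hb k (by omega) h

theorem mem_normalizer_zpowers_iff {a x : G} (ha : ¬IsOfFinOrder a) :
    x ∈ normalizer (zpowers a : Set G) ↔ x * a * x⁻¹ = a ∨ x * a * x⁻¹ = a⁻¹ := by
  rw [mem_normalizer_iff_map_conj_eq, MonoidHom.map_zpowers, MonoidHom.coe_coe,
    MulAut.conj_apply, eq_comm, zpowers_eq_zpowers_iff ha, eq_comm, @eq_comm _ a⁻¹]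

end Subgroup

theorem not_isOfFinOrder_zpow {G : Type*} [Group G] {x : G} (hx : ¬IsOfFinOrder x) {n : ℤ}
    (hn : n ≠ 0) : ¬IsOfFinOrder (x ^ n) := by
  obtain ⟨k, rfl | rfl⟩ := Int.eq_nat_or_neg n <;>
  · simp only [zpow_neg, isOfFinOrder_inv_iff, zpow_natCast, isOfFinOrder_pow, hx, false_or]
    omega

open Subgroup in
/-- If `N` is a normal subgroup of `G` with the unique-roots property, then for every
`f ∈ N` of infinite order and every nonzero integer `t`, the normalizer in `G` of the
cyclic subgroup `⟨f⟩` equals the normalizer in `G` of `⟨f ^ t⟩`. -/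
theorem normalizer_zpowers_eq_normalizer_zpowers_zpow {G : Type*} [Group G]
    (N : Subgroup G) (hN : N.Normal)
    (hroots : ∀ a ∈ N, ∀ b ∈ N, ∀ t : ℕ, 1 ≤ t → a ^ t = b ^ t → a = b)
    (f : G) (hf : f ∈ N) (hford : ¬ IsOfFinOrder f) (t : ℤ) (ht : t ≠ 0) :
    Subgroup.normalizer (Subgroup.zpowers f : Set G) = Subgroup.normalizer (Subgroup.zpowers (f ^ t) : Set G) := by
  have hroots : N.HasUniqueRoots := hroots
  ext g
  have hconj : g * f * g⁻¹ ∈ N := hN.conj_mem f hf g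
  rw [mem_normalizer_zpowers_iff hford,
    mem_normalizer_zpowers_iff (not_isOfFinOrder_zpow hford ht), ← conj_zpow, ← inv_zpow,
    hroots.zpow_eq_zpow_iff hconj hf ht, hroots.zpow_eq_zpow_iff hconj (inv_mem hf) ht]
end

section
/- Let $G$ be a group satisfying condition (C), let $N \trianglelefteq G$ be a normal subgroup with the unique-roots property, let $g \in G$ have infinite order, and let $n \ge 1$ be an integer with $g^n \in N$. Then the commensurator $N_G[\langle g \rangle] = \{x \in G : x \langle g \rangle x^{-1} \cap \langle g \rangle \text{ is infinite}\}$ equals the normalizer $N_G(\langle g^n \rangle)$ of the cyclic subgroup generated by $g^n$. -/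
/-! If `x` conjugates a nontrivial power `g ^ k` into `⟨g⟩`, condition (C) forces
`x g^k x⁻¹ = g^(±k)`. Then `x g^n x⁻¹` and `g^(±n)` are elements of `N` with equal `k`-th
powers, so unique roots gives `x g^n x⁻¹ = g^(±n)`, and `x` normalizes `⟨g^n⟩`. Conversely,
conjugation by an element of the normalizer maps the infinite group `⟨g^n⟩ ≤ ⟨g⟩` onto itself,
so `x⟨g⟩x⁻¹ ∩ ⟨g⟩` contains it. -/

open Subgroup

section
variable {G : Type*} [Group G]

theorem eq_of_zpow_eq_zpow_of_uniqueRoots {N : Subgroup G}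
    (hroots : ∀ a ∈ N, ∀ b ∈ N, ∀ t : ℕ, 1 ≤ t → a ^ t = b ^ t → a = b)
    {a b : G} (ha : a ∈ N) (hb : b ∈ N) {k : ℤ} (hk : k ≠ 0) (h : a ^ k = b ^ k) : a = b := by
  refine hroots a ha b hb k.natAbs (by omega) ?_
  rcases Int.natAbs_eq k with e | e <;> rw [e] at h
  · exact_mod_cast h
  · simpa only [zpow_neg, inv_inj, zpow_natCast] using h

theorem mem_normalizer_zpowers_of_conj_eq_zpow {x u : G} {ε : ℤ} (hε : ε = 1 ∨ ε = -1)
    (h : x * u * x⁻¹ = u ^ ε) : x ∈ normalizer (zpowers u : Set G) := by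
  rw [mem_normalizer_iff_map_conj_eq, MonoidHom.map_zpowers]
  rcases hε with rfl | rfl <;> simp [h, zpowers_inv]

theorem conj_zpow_zpow_eq_of_conj_zpow_eq {x g : G} {k l : ℤ} (h : x * g ^ k * x⁻¹ = g ^ l)
    (m : ℤ) : (x * g ^ m * x⁻¹) ^ k = (g ^ m) ^ l := by
  rw [conj_zpow, ← zpow_mul, mul_comm, zpow_mul, ← conj_zpow, h, ← zpow_mul, ← zpow_mul, mul_comm]

theorem exists_conj_zpow_eq_zpow_of_infinite {x g : G}
    (hx : ((fun y => x * y * x⁻¹) '' (zpowers g : Set G) ∩ zpowers g).Infinite) :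
    ∃ k l : ℤ, k ≠ 0 ∧ x * g ^ k * x⁻¹ = g ^ l := by
  obtain ⟨_, ⟨⟨_, ⟨k, rfl⟩, rfl⟩, ⟨l, hl⟩⟩, hne⟩ :=
    hx.exists_notMem_finite (Set.finite_singleton 1)
  refine ⟨k, l, ?_, hl.symm⟩
  rintro rfl
  simp at hne

theorem infinite_conj_image_inter_of_mem_normalizer {x g u : G} (hu : u ∈ zpowers g)
    (hu_inf : ¬IsOfFinOrder u) (hx : x ∈ normalizer (zpowers u : Set G)) :
    ((fun y => x * y * x⁻¹) '' (zpowers g : Set G) ∩ zpowers g).Infinite := by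
  have hle : (zpowers u : Set G) ⊆ zpowers g := zpowers_le.mpr hu
  rw [mem_normalizer_iff_conj_image_eq] at hx
  refine (infinite_zpowers.mpr hu_inf).mono (Set.subset_inter ?_ hle)
  rw [← hx]
  exact Set.image_mono hle

theorem mem_normalizer_of_infinite_conj_image_inter
    (hC : ∀ g h : G, ¬ IsOfFinOrder h → ∀ k l : ℤ, g * h ^ k * g⁻¹ = h ^ l → |k| = |l|)
    {N : Subgroup G} (hN : N.Normal)
    (hroots : ∀ a ∈ N, ∀ b ∈ N, ∀ t : ℕ, 1 ≤ t → a ^ t = b ^ t → a = b)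
    {x g u : G} (hg : ¬IsOfFinOrder g) (hu : u ∈ zpowers g) (huN : u ∈ N)
    (hx : ((fun y => x * y * x⁻¹) '' (zpowers g : Set G) ∩ zpowers g).Infinite) :
    x ∈ normalizer (zpowers u : Set G) := by
  obtain ⟨k, l, hk, hkl⟩ := exists_conj_zpow_eq_zpow_of_infinite hx
  obtain ⟨ε, hε, rfl⟩ : ∃ ε : ℤ, (ε = 1 ∨ ε = -1) ∧ l = ε * k := by
    rcases abs_eq_abs.mp (hC x g hg k l hkl) with h | h
    · exact ⟨1, .inl rfl, by omega⟩
    · exact ⟨-1, .inr rfl, by omega⟩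
  obtain ⟨m, rfl⟩ := mem_zpowers_iff.mp hu
  refine mem_normalizer_zpowers_of_conj_eq_zpow hε
    (eq_of_zpow_eq_zpow_of_uniqueRoots hroots (hN.conj_mem _ huN x) (zpow_mem huN ε) hk ?_)
  rw [conj_zpow_zpow_eq_of_conj_zpow_eq hkl, zpow_mul]

end

/-- Let `G` satisfy condition (C), let `N` be a normal subgroup with the unique-roots
property, let `g ∈ G` have infinite order, and let `n ≥ 1` with `g ^ n ∈ N`. Then the
commensurator of `⟨g⟩` equals the normalizer of `⟨g ^ n⟩`. -/
theorem commensurator_eq_normalizer {G : Type*} [Group G]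
    (hC : ∀ g h : G, ¬ IsOfFinOrder h → ∀ k l : ℤ, g * h ^ k * g⁻¹ = h ^ l → |k| = |l|)
    (N : Subgroup G) (hN : N.Normal)
    (hroots : ∀ a ∈ N, ∀ b ∈ N, ∀ t : ℕ, 1 ≤ t → a ^ t = b ^ t → a = b)
    (g : G) (hg : ¬ IsOfFinOrder g) (n : ℕ) (hn : 1 ≤ n) (hgn : g ^ n ∈ N) :
    {x : G | (((fun y => x * y * x⁻¹) '' (Subgroup.zpowers g : Set G)) ∩
        (Subgroup.zpowers g : Set G)).Infinite}
      = (Subgroup.normalizer (Subgroup.zpowers (g ^ n) : Set G) : Set G) := by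
  have hgn_inf : ¬IsOfFinOrder (g ^ n) := fun h => hg (h.of_pow (by omega))
  have hgn_mem : g ^ n ∈ zpowers g := pow_mem (mem_zpowers g) n
  ext x
  exact ⟨mem_normalizer_of_infinite_conj_image_inter hC hN hroots hg hgn_mem hgn,
    infinite_conj_image_inter_of_mem_normalizer hgn_mem hgn_inf⟩
end

section
/- Let $G$ be a group and $U, V, W \le G$ subgroups, where $W$ contains an element $w$ of infinite order such that the cyclic subgroup $\langle w \rangle$ has finite index in $W$. If $U \cap W$ is infinite and $W \cap V$ is infinite, then $U \cap V$ is infinite. -/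
/-!
Pigeonhole on the finitely many cosets of `⟨w⟩` in `W`: two distinct elements of the infinite
set `U ∩ W` lie in the same coset, so their quotient is a nontrivial power `w ^ n` lying in `U`.
Likewise some `w ^ m` with `m ≠ 0` lies in `V`, and then `w ^ (n * m)`, which has infinite order,
generates an infinite subgroup of `U ∩ V`.
-/

theorem Subgroup.exists_ne_one_mem_inf_of_infinite_inter {G : Type*} [Group G]
    (H : Subgroup G) {W X : Subgroup G} [(H.subgroupOf W).FiniteIndex]
    (h : ((X : Set G) ∩ W).Infinite) :
    ∃ x ∈ X ⊓ H, x ≠ 1 := by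
  have := h.to_subtype
  obtain ⟨a, b, hne, hab⟩ := Finite.exists_ne_map_eq_of_infinite
    fun x : ((X : Set G) ∩ W : Set G) =>
      (QuotientGroup.mk ⟨x.1, x.2.2⟩ : W ⧸ H.subgroupOf W)
  have hH : a.1⁻¹ * b.1 ∈ H := Subgroup.mem_subgroupOf.1 (QuotientGroup.eq.1 hab)
  have hX : a.1⁻¹ * b.1 ∈ X := mul_mem (inv_mem a.2.1) b.2.1
  refine ⟨a.1⁻¹ * b.1, Subgroup.mem_inf.2 ⟨hX, hH⟩, ?_⟩
  rw [Ne, inv_mul_eq_one]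
  exact fun heq => hne (Subtype.ext heq)

theorem Subgroup.exists_zpow_mem_of_infinite_inter {G : Type*} [Group G]
    (w : G) {W X : Subgroup G} [((Subgroup.zpowers w).subgroupOf W).FiniteIndex]
    (h : ((X : Set G) ∩ W).Infinite) : ∃ n : ℤ, n ≠ 0 ∧ w ^ n ∈ X := by
  obtain ⟨x, hx, hne⟩ :=
    Subgroup.exists_ne_one_mem_inf_of_infinite_inter (Subgroup.zpowers w) h
  obtain ⟨hX, n, rfl⟩ := Subgroup.mem_inf.1 hx
  exact ⟨n, fun hn => hne (by simp [hn]), hX⟩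

theorem IsOfFinOrder.of_zpow {G : Type*} [Group G] {a : G} {n : ℤ}
    (h : IsOfFinOrder (a ^ n)) (hn : n ≠ 0) : IsOfFinOrder a := by
  have hn' : n.natAbs ≠ 0 := Int.natAbs_ne_zero.2 hn
  rcases Int.natAbs_eq n with hpos | hneg
  · rw [hpos, zpow_natCast] at h
    exact h.of_pow hn'
  · rw [hneg, zpow_neg, zpow_natCast, isOfFinOrder_inv_iff] at h
    exact h.of_pow hn'

theorem inter_infinite_trans_general {G : Type*} [Group G] (U V W : Subgroup G)
    (w : G) (hford : ¬ IsOfFinOrder w)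
    (hfi : ((Subgroup.zpowers w).subgroupOf W).FiniteIndex)
    (hUW : ((U : Set G) ∩ (W : Set G)).Infinite)
    (hWV : ((W : Set G) ∩ (V : Set G)).Infinite) :
    ((U : Set G) ∩ (V : Set G)).Infinite := by
  obtain ⟨n, hn, hnU⟩ := Subgroup.exists_zpow_mem_of_infinite_inter w hUW
  obtain ⟨m, hm, hmV⟩ :=
    Subgroup.exists_zpow_mem_of_infinite_inter w (Set.inter_comm _ _ ▸ hWV)
  have hinf : (Subgroup.zpowers (w ^ (n * m)) : Set G).Infinite :=
    infinite_zpowers.2 fun h => hford (h.of_zpow (mul_ne_zero hn hm))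
  have hmem : w ^ (n * m) ∈ U ⊓ V := by
    refine ⟨?_, ?_⟩
    · rw [zpow_mul]
      exact zpow_mem hnU m
    · rw [mul_comm, zpow_mul]
      exact zpow_mem hmV n
  exact hinf.mono (Subgroup.zpowers_le.2 hmem)

/-- Transitivity of the Lück–Weiermann relation through an infinite virtually cyclic
subgroup: if `W` contains an infinite-order element `w` with `⟨w⟩` of finite index in
`W`, and `U ∩ W` and `W ∩ V` are infinite, then `U ∩ V` is infinite. -/
theorem inter_infinite_trans {G : Type*} [Group G] (U V W : Subgroup G)
    (w : G) (hw : w ∈ W) (hford : ¬ IsOfFinOrder w)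
    (hfi : ((Subgroup.zpowers w).subgroupOf W).FiniteIndex)
    (hUW : ((U : Set G) ∩ (W : Set G)).Infinite)
    (hWV : ((W : Set G) ∩ (V : Set G)).Infinite) :
    ((U : Set G) ∩ (V : Set G)).Infinite :=
  inter_infinite_trans_general U V W w hford hfi hUW hWV
end

section
/- Let $\theta : G \to Q$ be a group homomorphism whose kernel is contained in the center of $G$. If $Q$ satisfies condition (C), then $G$ satisfies condition (C). -/
/-- If `θ : G →* Q` has central kernel and `Q` satisfies condition (C), then `G`
satisfies condition (C). -/
theorem conditionC_of_central_kernel {G Q : Type*} [Group G] [Group Q]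
    (θ : G →* Q) (hker : θ.ker ≤ Subgroup.center G)
    (hQ : ∀ g h : Q, ¬ IsOfFinOrder h → ∀ k l : ℤ, g * h ^ k * g⁻¹ = h ^ l → |k| = |l|) :
    ∀ g h : G, ¬ IsOfFinOrder h → ∀ k l : ℤ, g * h ^ k * g⁻¹ = h ^ l → |k| = |l| := by
  intro g h hh k l heq
  have hinj : Function.Injective fun n : ℤ => h ^ n :=
    injective_zpow_iff_not_isOfFinOrder.mpr hh
  by_cases hfin : IsOfFinOrder (θ h)
  · obtain ⟨n, hn, hpow⟩ := hfin.exists_pow_eq_one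
    have hmem : h ^ (n : ℤ) ∈ θ.ker := by
      rw [MonoidHom.mem_ker, map_zpow, zpow_natCast, hpow]
    have hc := Subgroup.mem_center_iff.mp (hker hmem)
    have hcomm : Commute g (h ^ (k * (n : ℤ))) := by
      have hc' : Commute g (h ^ (n : ℤ)) := hc g
      simpa [mul_comm k (n : ℤ), zpow_mul] using hc'.zpow_right k
    have key : h ^ (k * (n : ℤ)) = h ^ (l * (n : ℤ)) := by
      have h1 : g * h ^ (k * (n : ℤ)) * g⁻¹ = h ^ (l * (n : ℤ)) := by
        rw [zpow_mul, zpow_mul, zpow_natCast, zpow_natCast, ← conj_pow]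
        exact congrArg (· ^ n) heq
      have h2 : g * h ^ (k * (n : ℤ)) * g⁻¹ = h ^ (k * (n : ℤ)) := by
        rw [hcomm.eq, mul_assoc, mul_inv_cancel, mul_one]
      rw [← h2, h1]
    have := hinj key
    have hn' : (n : ℤ) ≠ 0 := by exact_mod_cast hn.ne'
    have : k = l := mul_right_cancel₀ hn' this
    simp [this]
  · apply hQ (θ g) (θ h) hfin k l
    have := congrArg θ heq
    simpa [map_mul, map_zpow] using this
end

section
/- Let $G$ be a group and $H, K \le G$ subgroups such that $H$ contains an element $h$ of infinite order with $\langle h \rangle$ of finite index in $H$, and $K$ contains an element $k$ of infinite order with $\langle k \rangle$ of finite index in $K$. Let $C \le H$ and $D \le K$ be any infinite subgroups. Then $H \cap K$ is infinite if and only if $C \cap D$ is infinite. -/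
/-!
An infinite subgroup `C ≤ H` meets the finite-index cyclic subgroup `⟨h⟩` in a subgroup of finite
index in `C`, which is therefore infinite and contains some `h ^ m` with `m ≠ 0`. As `⟨h ^ m⟩` has
finite index in `⟨h⟩`, hence in `H`, so does `C`. Consequently `C ∩ D` has finite index in
`H ∩ K`, and one of them is infinite exactly when the other is.
-/

open Subgroup

section

variable {G : Type*} [Group G]

theorem Subgroup.relIndex_zpowers_zpow_ne_zero (x : G) {m : ℤ} (hm : m ≠ 0) :
    (zpowers (x ^ m)).relIndex (zpowers x) ≠ 0 := by
  have hle : (AddSubgroup.zmultiples m).toSubgroup ≤ (zpowers (x ^ m)).comap (zpowersHom G x) := by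
    rintro n ⟨j, hj⟩
    exact ⟨j, by simp [← hj, ← zpow_mul, mul_comm]⟩
  rw [← range_zpowersHom x, ← index_comap]
  refine ne_zero_of_dvd_ne_zero ?_ (index_dvd_of_le hle)
  simpa [Int.index_zmultiples] using hm

theorem Subgroup.infinite_of_relIndex_ne_zero {C H : Subgroup G} (hCH : C.relIndex H ≠ 0)
    (hH : (H : Set G).Infinite) : (C : Set G).Infinite := by
  have hcard : Nat.card (C ⊓ H : Subgroup G) * C.relIndex H = Nat.card H := by
    rw [← inf_relIndex_right, ← relIndex_bot_left, ← relIndex_bot_left,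
      relIndex_mul_relIndex _ _ _ bot_le inf_le_right]
  refine fun hC ↦ hH (Set.finite_coe_iff.mp (Nat.finite_of_card_ne_zero (α := H) ?_))
  have : Finite (C ⊓ H : Subgroup G) := (hC.subset inf_le_left).to_subtype
  rw [← hcard]
  exact mul_ne_zero Nat.card_pos.ne' hCH

theorem Subgroup.relIndex_ne_zero_of_infinite {x : G} {C H : Subgroup G}
    (hx : (zpowers x).relIndex H ≠ 0) (hCH : C ≤ H) (hC : (C : Set G).Infinite) :
    C.relIndex H ≠ 0 := by
  have hxC : (zpowers x ⊓ C).relIndex C ≠ 0 := by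
    rw [inf_relIndex_right]
    exact mt (relIndex_eq_zero_of_le_right hCH) hx
  obtain ⟨_, ⟨⟨m, rfl⟩, hxmC⟩, hxm⟩ :=
    ((infinite_of_relIndex_ne_zero hxC hC).sdiff (Set.finite_singleton 1)).nonempty
  have hm : m ≠ 0 := by
    rintro rfl
    simp at hxm
  exact mt (relIndex_eq_zero_of_le_left (zpowers_le.mpr hxmC))
    (relIndex_ne_zero_trans (relIndex_zpowers_zpow_ne_zero x hm) hx)

end

theorem inter_infinite_iff_of_infinite_subgroups_general {G : Type*} [Group G]
    (H K : Subgroup G)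
    (h : G)
    (hfih : ((Subgroup.zpowers h).subgroupOf H).FiniteIndex)
    (k : G)
    (hfik : ((Subgroup.zpowers k).subgroupOf K).FiniteIndex)
    (C D : Subgroup G) (hCH : C ≤ H) (hDK : D ≤ K)
    (hC : (C : Set G).Infinite) (hD : (D : Set G).Infinite) :
    ((H : Set G) ∩ (K : Set G)).Infinite ↔ ((C : Set G) ∩ (D : Set G)).Infinite := by
  refine ⟨fun hHK ↦ ?_, fun hCD ↦ hCD.mono (Set.inter_subset_inter hCH hDK)⟩
  have hCH' : C.relIndex H ≠ 0 := relIndex_ne_zero_of_infinite hfih.index_ne_zero hCH hC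
  have hDK' : D.relIndex K ≠ 0 := relIndex_ne_zero_of_infinite hfik.index_ne_zero hDK hD
  have hCD : (C ⊓ D).relIndex (H ⊓ K) ≠ 0 :=
    relIndex_inf_ne_zero (mt (relIndex_eq_zero_of_le_right inf_le_left) hCH')
      (mt (relIndex_eq_zero_of_le_right inf_le_right) hDK')
  rw [← coe_inf] at hHK ⊢
  exact infinite_of_relIndex_ne_zero hCD hHK

/-- For infinite virtually cyclic subgroups `H, K` of `G` and any infinite subgroups
`C ≤ H`, `D ≤ K`, the intersection `H ∩ K` is infinite iff `C ∩ D` is infinite. -/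
theorem inter_infinite_iff_of_infinite_subgroups {G : Type*} [Group G]
    (H K : Subgroup G)
    (h : G) (hh : h ∈ H) (hfordh : ¬ IsOfFinOrder h)
    (hfih : ((Subgroup.zpowers h).subgroupOf H).FiniteIndex)
    (k : G) (hk : k ∈ K) (hfordk : ¬ IsOfFinOrder k)
    (hfik : ((Subgroup.zpowers k).subgroupOf K).FiniteIndex)
    (C D : Subgroup G) (hCH : C ≤ H) (hDK : D ≤ K)
    (hC : (C : Set G).Infinite) (hD : (D : Set G).Infinite) :
    ((H : Set G) ∩ (K : Set G)).Infinite ↔ ((C : Set G) ∩ (D : Set G)).Infinite :=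
  inter_infinite_iff_of_infinite_subgroups_general H K h hfih k hfik C D hCH hDK hC hD
end
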